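/- Let X ⊂ P^{n+1} be a hypersurface of degree d ≥ 2 and dimension n ≥ 2 over F_q with N_q(X) = Θ_n^{d,q}. Then X has at least one nonsingular point, i.e., Sing(X) ≠ X. -/

import Mathlib

/-!
If every `F_q`-point of `X = {P = 0}` were singular, the affine cone of `X` would lie in the zero
set of a nonzero form `f` of degree at most `d - 1`: a nonzero partial derivative of `P` or, when
all of them vanish, a `p`-th root of `P`. The cone has `(q - 1) Θ + 1` points, and comparing this
with the Schwartz–Zippel bound `(d - 1) q ^ (n + 1)` for `f` and with `q ^ (n + 2)` forces
`d = q + 1` and `P` to vanish on all of `F_q ^ (n + 2)`. Then so does `f`, which is impossible for a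
nonzero form of degree at most `q`.
-/

open MvPolynomial
open scoped LinearAlgebra.Projectivization

namespace MvPolynomial

section CommSemiring

variable {σ R : Type*} [CommSemiring R]

theorem IsHomogeneous.eval_smul {f : MvPolynomial σ R} {n : ℕ} (hf : f.IsHomogeneous n) (c : R)
    (v : σ → R) : eval (c • v) f = c ^ n * eval v f := by
  rw [f.as_sum, map_sum, map_sum, Finset.mul_sum]
  refine Finset.sum_congr rfl fun s hs => ?_
  rw [eval_monomial, eval_monomial, ← hf (mem_support_iff.mp hs)]
  simp only [Finsupp.prod, Pi.smul_apply, smul_eq_mul, mul_pow, Finset.prod_mul_distrib,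
    Finset.prod_pow_eq_pow_sum, Finsupp.weight_apply, Finsupp.sum, Pi.one_apply, mul_one]
  ring

theorem IsHomogeneous.eval_zero {f : MvPolynomial σ R} {n : ℕ} (hf : f.IsHomogeneous n)
    (hn : n ≠ 0) : eval 0 f = 0 := by
  simpa [zero_pow hn] using hf.eval_smul 0 0

theorem IsHomogeneous.of_expand {p : ℕ} (hp : p ≠ 0) {g : MvPolynomial σ R} {n : ℕ}
    (h : (expand p g).IsHomogeneous n) : g.IsHomogeneous (n / p) := by
  intro m hm
  have := h (show coeff (p • m) (expand p g) ≠ 0 by rwa [coeff_expand_smul _ hp])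
  rw [← this, map_nsmul, smul_eq_mul, Nat.mul_div_cancel_left _ (Nat.pos_of_ne_zero hp)]

end CommSemiring

section CharP

variable {σ R : Type*} [CommRing R] [IsDomain R] (p : ℕ) [CharP R p] {f : MvPolynomial σ R}

theorem dvd_of_pderiv_eq_zero {i : σ} (h : pderiv i f = 0) {s : σ →₀ ℕ} (hs : s ∈ f.support) :
    p ∣ s i := by
  rcases Nat.eq_zero_or_pos (s i) with hsi | hsi
  · simp [hsi]
  have hcoeff := coeff_pderiv (i := i) f (s - Finsupp.single i 1)
  rw [h, coeff_zero, tsub_add_cancel_of_le (Finsupp.single_le_iff.mpr hsi), Finsupp.tsub_apply,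
    Finsupp.single_eq_same, ← Nat.cast_add_one, Nat.sub_add_cancel hsi, eq_comm] at hcoeff
  exact (CharP.cast_eq_zero_iff R p _).mp
    ((mul_eq_zero.mp hcoeff).resolve_left (mem_support_iff.mp hs))

theorem exists_expand_eq_of_forall_pderiv_eq_zero (h : ∀ i, pderiv i f = 0) :
    ∃ g, expand p g = f := by
  refine ⟨∑ s ∈ f.support, monomial (s.mapRange (· / p) (Nat.zero_div p)) (coeff s f), ?_⟩
  conv_rhs => rw [f.as_sum]
  rw [map_sum]
  refine Finset.sum_congr rfl fun s hs => ?_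
  rw [expand_monomial]
  congr
  ext i
  simp [Nat.mul_div_cancel' (dvd_of_pderiv_eq_zero p (h i) hs)]

end CharP

theorem IsHomogeneous.exists_pow_eq_of_forall_pderiv_eq_zero {σ K : Type*} [Field K] (p : ℕ)
    [Fact p.Prime] [CharP K p] [PerfectRing K p] {f : MvPolynomial σ K} {n : ℕ}
    (hf : f.IsHomogeneous n) (h : ∀ i, pderiv i f = 0) :
    ∃ g : MvPolynomial σ K, g.IsHomogeneous (n / p) ∧ g ^ p = f := by
  obtain ⟨g, rfl⟩ := exists_expand_eq_of_forall_pderiv_eq_zero p h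
  refine ⟨map (frobeniusEquiv K p).symm g, (hf.of_expand (Fact.out : p.Prime).ne_zero).map _, ?_⟩
  rw [← map_frobenius_expand, map_expand, map_map]
  simp [map_id]

theorem card_zeros_mul_card_le {R : Type*} [CommRing R] [IsDomain R] [Fintype R] {m : ℕ}
    {f : MvPolynomial (Fin m) R} (hf : f ≠ 0) :
    Nat.card {v : Fin m → R | eval v f = 0} * Fintype.card R ≤
      f.totalDegree * Fintype.card R ^ m := by
  classical
  have hsz := schwartz_zippel_totalDegree hf Finset.univ
  simp only [Fintype.piFinset_univ, Finset.card_univ] at hsz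
  have hR : (0 : ℚ≥0) < Fintype.card R := by exact_mod_cast Fintype.card_pos
  rw [div_le_div_iff₀ (by positivity) hR] at hsz
  rw [Nat.card_eq_fintype_card, Fintype.card_subtype]
  exact_mod_cast hsz

theorem IsHomogeneous.card_zeros_eq {σ K : Type*} [Finite σ] [Field K] [Finite K]
    {f : MvPolynomial σ K} {e : ℕ} (hf : f.IsHomogeneous e) (he : e ≠ 0) :
    Nat.card {v : σ → K | eval v f = 0} =
      (Nat.card K - 1) * Nat.card {x : ℙ K (σ → K) | eval x.rep f = 0} + 1 := by
  have hrep : ∀ v (hv : v ≠ 0), eval v f = 0 ↔ eval (Projectivization.mk K v hv).rep f = 0 := by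
    intro v hv
    obtain ⟨a, ha⟩ := Projectivization.exists_smul_eq_mk_rep K v hv
    rw [← ha, Units.smul_def, hf.eval_smul]
    simp [a.ne_zero]
  have hpunctured : Nat.card ↥({v : σ → K | eval v f = 0} \ {0}) =
      Nat.card {x : ℙ K (σ → K) | eval x.rep f = 0} * (Nat.card K - 1) := by
    calc Nat.card ↥({v : σ → K | eval v f = 0} \ {0})
        = Nat.card {v : {v : σ → K // v ≠ 0} // eval v.1 f = 0} :=
          Nat.card_congr ((Equiv.subtypeSubtypeEquivSubtypeInter _ _).trans
            (Equiv.subtypeEquivRight fun v => and_comm)).symm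
      _ = Nat.card {p : ℙ K (σ → K) × Kˣ // eval p.1.rep f = 0} :=
          Nat.card_congr ((Projectivization.nonZeroEquivProjectivizationProdUnits K _).subtypeEquiv
            fun v => hrep v.1 v.2)
      _ = _ := by
          rw [Nat.card_congr (Equiv.prodSubtypeFstEquivSubtypeProd
              (p := fun x : ℙ K (σ → K) => eval x.rep f = 0)), Nat.card_prod, Nat.card_units]
          rfl
  rw [Nat.card_coe_set_eq,
    ← Set.ncard_sdiff_singleton_add_one (s := {v : σ → K | eval v f = 0}) (hf.eval_zero he),
    ← Nat.card_coe_set_eq, hpunctured, mul_comm]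

theorem IsHomogeneous.exists_isHomogeneous_vanishing_of_forall_singular {σ K : Type*} [Field K]
    [Fintype K] {P : MvPolynomial σ K} {d : ℕ} (hP : P.IsHomogeneous d) (hP0 : P ≠ 0)
    (hd : 2 ≤ d) (hsing : ∀ v, v ≠ 0 → eval v P = 0 → ∀ i, eval v (pderiv i P) = 0) :
    ∃ e ≤ d - 1, ∃ f : MvPolynomial σ K,
      f ≠ 0 ∧ f.IsHomogeneous e ∧ ∀ v, eval v P = 0 → eval v f = 0 := by
  by_cases hpderiv : ∀ i, pderiv i P = 0
  · obtain ⟨p, _⟩ := CharP.exists K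
    have hp : p.Prime := CharP.char_is_prime K p
    have := Fact.mk hp
    obtain ⟨g, hg, rfl⟩ := hP.exists_pow_eq_of_forall_pderiv_eq_zero p hpderiv
    refine ⟨d / p, (Nat.div_le_div_left hp.two_le two_pos).trans (by omega), g,
      fun h => hP0 (by rw [h, zero_pow hp.ne_zero]), hg, fun v hv => ?_⟩
    rwa [map_pow, pow_eq_zero_iff hp.ne_zero] at hv
  · obtain ⟨i, hi⟩ := not_forall.mp hpderiv
    refine ⟨d - 1, le_rfl, pderiv i P, hi, hP.pderiv, fun v hv => ?_⟩
    rcases eq_or_ne v 0 with rfl | hv0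
    · exact hP.pderiv.eval_zero (by omega)
    · exact hsing v hv0 hv i

end MvPolynomial

/-- `Θ_n^{d,q}`. -/
def theta (d q n : ℕ) : ℕ :=
  (d - 1) * q ^ n + d * q ^ (n - 1) + ∑ i ∈ Finset.range (n - 1), q ^ i

theorem sub_one_mul_theta_add_one {d q n : ℕ} (hd : 1 ≤ d) (hq : 1 ≤ q) (hn : 1 ≤ n) :
    (((q - 1) * theta d q n + 1 : ℕ) : ℤ) = q ^ (n - 1) * ((d - 1) * q ^ 2 + q + 1 - d) := by
  obtain ⟨k, rfl⟩ : ∃ k, n = k + 1 := ⟨n - 1, by omega⟩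
  simp only [theta, Nat.add_sub_cancel]
  push_cast [Nat.cast_sub hq, Nat.cast_sub hd]
  linear_combination geom_sum_mul (q : ℤ) k

theorem eq_add_one_of_sub_one_mul_theta_add_one_le {d q n : ℕ} (hd : 1 ≤ d) (hq : 2 ≤ q)
    (hn : 1 ≤ n) (hle : (q - 1) * theta d q n + 1 ≤ q ^ (n + 2))
    (hle' : ((q - 1) * theta d q n + 1) * q ≤ (d - 1) * q ^ (n + 2)) :
    d = q + 1 ∧ (q - 1) * theta d q n + 1 = q ^ (n + 2) := by
  have hN := sub_one_mul_theta_add_one hd (show 1 ≤ q by omega) hn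
  generalize (q - 1) * theta d q n + 1 = N at hle hle' hN ⊢
  zify [hd] at hle hle' ⊢
  have hpow : (q : ℤ) ^ (n + 2) = q ^ (n - 1) * q ^ 3 := by
    rw [← pow_add]
    congr 1
    omega
  rw [hN, hpow] at hle hle' ⊢
  have ha : (0 : ℤ) < q ^ (n - 1) := by positivity
  have hq' : (2 : ℤ) ≤ q := by exact_mod_cast hq
  have hlow : (q : ℤ) + 1 ≤ d := by
    have : (q : ℤ) ^ (n - 1) * q * ((d - 1) * q ^ 2 + q + 1 - d) ≤
        q ^ (n - 1) * q * ((d - 1) * q ^ 2) := by linarith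
    linarith [le_of_mul_le_mul_left this (by positivity)]
  have hup : (d : ℤ) ≤ q + 1 := by
    have h : ((q : ℤ) ^ 2 - 1) * (d - (q + 1)) ≤ 0 := by
      linarith [le_of_mul_le_mul_left hle ha]
    linarith [nonpos_of_mul_nonpos_right h (by nlinarith : (0 : ℤ) < q ^ 2 - 1)]
  have hdq : (d : ℤ) = q + 1 := le_antisymm hup hlow
  refine ⟨by exact_mod_cast hdq, ?_⟩
  rw [hdq]
  ring

theorem stmt15_general (q d n : ℕ) (hn : 2 ≤ n) (hd : 2 ≤ d)
    (K : Type*) [Field K] [Fintype K] (hK : Fintype.card K = q)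
    (P : MvPolynomial (Fin (n + 2)) K) (hP : P.IsHomogeneous d) (hP0 : P ≠ 0)
    (hNX : Nat.card {x : Projectivization K (Fin (n + 2) → K) |
        MvPolynomial.eval x.rep P = 0} =
      (d - 1) * q ^ n + d * q ^ (n - 1) + ∑ i ∈ Finset.range (n - 1), q ^ i) :
    ∃ v : Fin (n + 2) → K, v ≠ 0 ∧ MvPolynomial.eval v P = 0 ∧
      ∃ i, MvPolynomial.eval v (MvPolynomial.pderiv i P) ≠ 0 := by
  by_contra! hsing
  obtain ⟨e, he, f, hf0, hf, hPf⟩ :=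
    hP.exists_isHomogeneous_vanishing_of_forall_singular hP0 hd hsing
  have hcard : Nat.card {v : Fin (n + 2) → K | eval v P = 0} = (q - 1) * theta d q n + 1 := by
    rw [hP.card_zeros_eq (by omega), Nat.card_eq_fintype_card, hK, hNX, theta]
  have hspace : Nat.card (Fin (n + 2) → K) = q ^ (n + 2) := by
    simp [hK]
  have hle : (q - 1) * theta d q n + 1 ≤ q ^ (n + 2) :=
    hcard ▸ hspace ▸ Set.ncard_le_card _
  have hle' : ((q - 1) * theta d q n + 1) * q ≤ (d - 1) * q ^ (n + 2) := by
    calc ((q - 1) * theta d q n + 1) * q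
        ≤ Nat.card {v : Fin (n + 2) → K | eval v f = 0} * q := by
          rw [← hcard, Nat.card_coe_set_eq, Nat.card_coe_set_eq]
          exact Nat.mul_le_mul_right _ (Set.ncard_le_ncard hPf)
      _ ≤ f.totalDegree * q ^ (n + 2) := hK ▸ card_zeros_mul_card_le hf0
      _ ≤ (d - 1) * q ^ (n + 2) := Nat.mul_le_mul_right _ (hf.totalDegree_le.trans he)
  obtain ⟨hdq, hfull⟩ :=
    eq_add_one_of_sub_one_mul_theta_add_one_le (by omega) (hK ▸ Fintype.one_lt_card) (by omega)
      hle hle'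
  have hPall : ∀ v, eval v P = 0 := by
    refine Set.eq_univ_iff_forall.mp (Set.eq_of_subset_of_ncard_le (Set.subset_univ _) ?_)
    rw [Set.ncard_univ, hspace, ← hfull, ← hcard, Nat.card_coe_set_eq]
    exact le_rfl
  refine hf0 (hf.eq_zero_of_forall_eval_eq_zero_of_le_card (fun v => hPf v (hPall v)) ?_)
  rw [Cardinal.mk_fintype, hK]
  exact_mod_cast (by omega : e ≤ q)

/-- a hypersurface `X ⊂ P^{n+1}` of degree `d ≥ 2`, `n ≥ 2`, with
`N_q(X) = Θ_n^{d,q}` has at least one nonsingular `F_q`-point: `Sing(X) ⊊ X`. -/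
theorem stmt15 (q d n : ℕ) (hq : IsPrimePow q) (hn : 2 ≤ n) (hd : 2 ≤ d)
    (K : Type*) [Field K] [Fintype K] (hK : Fintype.card K = q)
    (P : MvPolynomial (Fin (n + 2)) K) (hP : P.IsHomogeneous d) (hP0 : P ≠ 0)
    (hNX : Nat.card {x : Projectivization K (Fin (n + 2) → K) |
        MvPolynomial.eval x.rep P = 0} =
      (d - 1) * q ^ n + d * q ^ (n - 1) + ∑ i ∈ Finset.range (n - 1), q ^ i) :
    ∃ v : Fin (n + 2) → K, v ≠ 0 ∧ MvPolynomial.eval v P = 0 ∧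
      ∃ i, MvPolynomial.eval v (MvPolynomial.pderiv i P) ≠ 0 :=
  stmt15_general q d n hn hd K hK P hP hP0 hNX
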